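/- Let A, B, C be locally small categories (hom-sets in Type u), let g : A ⥤ B, h : B ⥤ C, f : A ⥤ C be functors, and let φ : f ⟶ g ⋙ h be a natural transformation. Define B(g,1) : B ⥤ (Aᵒᵖ ⥤ Type u) by b ↦ (a ↦ Hom_B(g.obj a, b)), define C(f,1) : C ⥤ (Aᵒᵖ ⥤ Type u) by c ↦ (a ↦ Hom_C(f.obj a, c)), and define φ' : B(g,1) ⟶ h ⋙ C(f,1) by ((φ'.app b).app a)(β) = φ.app a ≫ h.map β for β : g.obj a ⟶ b. Then φ exhibits g as an absolute left lifting of f along h if and only if φ' is a natural isomorphism (equivalently, the maps Hom_B(g.obj a, b) → Hom_C(f.obj a, h.obj b), β ↦ φ.app a ≫ h.map β, are bijections for all a, b). -/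

import Mathlib

/-!
Both conditions amount to the bijectivity of every map `β ↦ φ.app a ≫ h.map β`. For `φ'` this
is checked componentwise. Testing the lifting property on the terminal category recovers these
maps; conversely, if they are bijective, a 2-cell `x ⋙ f ⟶ k ⋙ h` is inverted pointwise, and
naturality of `φ` makes the pointwise inverse natural.
-/

open CategoryTheory Opposite

universe u v₁ v₂ v₃ u₁ u₂ u₃ ux vx

section HomFunctor

variable {A : Type u₁} {B : Type u₂} {C : Type u₃}
variable [Category.{u} A] [Category.{u} B] [Category.{u} C]

/-- The functor `B(g,1) : B ⥤ (Aᵒᵖ ⥤ Type u)`, `b ↦ (a ↦ Hom_B(g.obj a, b))`. -/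
def homFunctor (g : A ⥤ B) : B ⥤ (Aᵒᵖ ⥤ Type u) where
  obj b :=
    { obj := fun a => (g.obj a.unop ⟶ b)
      map := fun m => TypeCat.ofHom fun β => g.map m.unop ≫ β }
  map k := { app := fun a => TypeCat.ofHom fun β => β ≫ k }

/-- The 2-cell `φ' : B(g,1) ⟶ h ⋙ C(f,1)` associated to `φ : f ⟶ g ⋙ h`, with
components `β ↦ φ.app a ≫ h.map β`. -/
def primeTrans (g : A ⥤ B) (h : B ⥤ C) (f : A ⥤ C) (φ : f ⟶ g ⋙ h) :
    homFunctor g ⟶ h ⋙ homFunctor f where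
  app b :=
    { app := fun a => TypeCat.ofHom fun β => φ.app a.unop ≫ h.map β
      naturality := by
        intro a a' m
        ext (β : g.obj a.unop ⟶ b)
        have hn := φ.naturality m.unop
        dsimp [homFunctor] at *
        change φ.app a'.unop ≫ h.map (g.map m.unop ≫ β) = f.map m.unop ≫ φ.app a.unop ≫ h.map β
        rw [Functor.map_comp, ← Category.assoc, ← hn, Category.assoc] }
  naturality := by
    intro b b' k
    ext a (β : g.obj a.unop ⟶ b)
    dsimp [homFunctor]
    change φ.app a.unop ≫ h.map (β ≫ k) = (φ.app a.unop ≫ h.map β) ≫ h.map k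
    rw [Functor.map_comp, Category.assoc]

end HomFunctor


/-- `ψ : s ⟶ h ⋙ t` exhibits `h` as an absolute left lifting of `s` along `t` when for
every category `X` and all functors `x : X ⥤ B`, `k : X ⥤ C`, pasting with the whiskering
of `ψ` by `x` is a bijection from 2-cells `x ⋙ h ⟶ k` to 2-cells `x ⋙ s ⟶ k ⋙ t`. -/
def ExhibitsAbsoluteLeftLifting.{xu, xv, bu, bv, cu, cv, pu, pv}
    {B : Type bu} {C : Type cu} {P : Type pu}
    [Category.{bv} B] [Category.{cv} C] [Category.{pv} P]
    (s : B ⥤ P) (h : B ⥤ C) (t : C ⥤ P) (ψ : s ⟶ h ⋙ t) : Prop :=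
  ∀ (X : Type xu) [Category.{xv} X] (x : X ⥤ B) (k : X ⥤ C),
    Function.Bijective fun δ : x ⋙ h ⟶ k => Functor.whiskerLeft x ψ ≫ Functor.whiskerRight δ t

section AbsoluteLeftLifting

variable {A : Type u₁} {B : Type u₂} {C : Type u₃}
  [Category.{v₁} A] [Category.{v₂} B] [Category.{v₃} C]
  {g : A ⥤ B} {h : B ⥤ C} {f : A ⥤ C} (φ : f ⟶ g ⋙ h)

theorem app_comp_map_comp_map {a a' : A} (m : a' ⟶ a) {b : B} (β : g.obj a ⟶ b) :
    φ.app a' ≫ h.map (g.map m ≫ β) = f.map m ≫ φ.app a ≫ h.map β := by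
  simp

theorem exhibitsAbsoluteLeftLifting_of_bijective
    (hφ : ∀ a b, Function.Bijective fun β : g.obj a ⟶ b => φ.app a ≫ h.map β) :
    ExhibitsAbsoluteLeftLifting.{ux, vx} f g h φ := by
  intro X _ x k
  let E p q : (g.obj (x.obj p) ⟶ k.obj q) ≃ (f.obj (x.obj p) ⟶ h.obj (k.obj q)) :=
    Equiv.ofBijective _ (hφ _ _)
  refine ⟨fun δ₁ δ₂ hδ => ?_, fun α => ?_⟩
  · ext p
    exact (E p p).injective (congr_app hδ p)
  · refine ⟨{ app p := (E p p).symm (α.app p), naturality p q m := ?_ }, ?_⟩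
    · have hE p q (β : g.obj (x.obj p) ⟶ k.obj q) : E p q β = φ.app _ ≫ h.map β := rfl
      have hL :
          E p q (g.map (x.map m) ≫ (E q q).symm (α.app q)) = f.map (x.map m) ≫ α.app q := by
        rw [hE, app_comp_map_comp_map, ← hE, Equiv.apply_symm_apply]
      have hR : E p q ((E p p).symm (α.app p) ≫ k.map m) = α.app p ≫ h.map (k.map m) := by
        rw [hE, h.map_comp, ← Category.assoc, ← hE, Equiv.apply_symm_apply]
      apply (E p q).injective
      rw [Functor.comp_map, hL, hR]
      exact α.naturality m
    · ext p
      exact (E p p).apply_symm_apply (α.app p)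

theorem ExhibitsAbsoluteLeftLifting.bijective
    (hφ : ExhibitsAbsoluteLeftLifting.{ux, vx} f g h φ) (a : A) (b : B) :
    Function.Bijective fun β : g.obj a ⟶ b => φ.app a ≫ h.map β := by
  -- the terminal category, in the universes the lifting property quantifies over
  let X := ULiftHom.{vx} (ULift.{ux} (Discrete PUnit.{1}))
  let pt : X := ⟨⟨⟨⟩⟩⟩
  have hX := hφ X ((Functor.const X).obj a) ((Functor.const X).obj b)
  let constHom (β : g.obj a ⟶ b) : (Functor.const X).obj a ⋙ g ⟶ (Functor.const X).obj b :=
    (Functor.constComp X a g).hom ≫ (Functor.const X).map β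
  refine ⟨fun β₁ β₂ hβ => ?_, fun γ => ?_⟩
  · have := hX.injective (a₁ := constHom β₁) (a₂ := constHom β₂)
      (by ext; simpa [constHom] using hβ)
    simpa [constHom] using congr_app this pt
  · obtain ⟨δ, hδ⟩ := hX.surjective <|
      (Functor.constComp X a f).hom ≫ (Functor.const X).map γ ≫ (Functor.constComp X b h).inv
    exact ⟨δ.app pt, by simpa using congr_app hδ pt⟩

end AbsoluteLeftLifting

theorem isIso_primeTrans_iff_bijective {A : Type u₁} {B : Type u₂} {C : Type u₃}
    [Category.{u} A] [Category.{u} B] [Category.{u} C]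
    (g : A ⥤ B) (h : B ⥤ C) (f : A ⥤ C) (φ : f ⟶ g ⋙ h) :
    IsIso (primeTrans g h f φ) ↔
      ∀ a b, Function.Bijective fun β : g.obj a ⟶ b => φ.app a ≫ h.map β := by
  simp only [NatTrans.isIso_iff_isIso_app, isIso_iff_bijective, op_surjective.forall]
  exact forall_comm

/-- `φ : f ⟶ g ⋙ h` exhibits `g` as an absolute left lifting of `f`
along `h` if and only if `φ' : B(g,1) ⟶ h ⋙ C(f,1)` is a natural isomorphism. -/
theorem stmt17 {A : Type u₁} {B : Type u₂} {C : Type u₃}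
    [Category.{u} A] [Category.{u} B] [Category.{u} C]
    (g : A ⥤ B) (h : B ⥤ C) (f : A ⥤ C) (φ : f ⟶ g ⋙ h) :
    ExhibitsAbsoluteLeftLifting.{ux, vx} f g h φ ↔ IsIso (primeTrans g h f φ) := by
  rw [isIso_primeTrans_iff_bijective]
  exact ⟨ExhibitsAbsoluteLeftLifting.bijective φ, exhibitsAbsoluteLeftLifting_of_bijective φ⟩
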